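/- arXiv:1805.09390 — 6 statements merged into one kernel-verified Lean document; each statement's English description precedes it below -/
import Mathlib

section
/- Let V be a type, W a finite type, R a binary relation on V, S a binary relation on W, and θ : V → W a map such that whenever R a b holds, S (θ a) (θ b) holds. Then for every infinite walk f : ℕ → V with respect to R (i.e., R (f n) (f (n+1)) for all n), there exists an index N such that for all i ≥ N and j ≥ N there is a nonempty directed S-path from θ (f i) to θ (f j), i.e., Relation.TransGen S (θ (f i)) (θ (f j)). -/
/-- If θ maps an (arbitrary) directed graph `R` on `V` edge-preservingly into a
finite directed graph `S` on `W`, then any infinite `R`-walk is, after some index `N`,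
mapped into a single strongly connected part of `S`: all images of later walk
vertices are mutually connected by nonempty directed `S`-paths. -/
theorem stmt_0 {V W : Type*} [Finite W] (R : V → V → Prop) (S : W → W → Prop)
    (θ : V → W) (hθ : ∀ a b, R a b → S (θ a) (θ b))
    (f : ℕ → V) (hf : ∀ n, R (f n) (f (n + 1))) :
    ∃ N : ℕ, ∀ i ≥ N, ∀ j ≥ N, Relation.TransGen S (θ (f i)) (θ (f j)) := by
  -- paths along the walk
  have key : ∀ m n : ℕ, m < n → Relation.TransGen S (θ (f m)) (θ (f n)) := by
    intro m n h
    induction n with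
    | zero => omega
    | succ k ih =>
      rcases Nat.lt_succ_iff_lt_or_eq.mp h with h' | h'
      · exact (ih h').tail (hθ _ _ (hf k))
      · subst h'; exact Relation.TransGen.single (hθ _ _ (hf m))
  -- some w occurs infinitely often
  obtain ⟨w, hw⟩ := Finite.exists_infinite_fiber (fun n => θ (f n))
  have hwS : Set.Infinite {n : ℕ | θ (f n) = w} := by rw [← Set.infinite_coe_iff]; exact hw
  have hex : ∀ k : ℕ, ∃ m > k, θ (f m) = w := by
    intro k
    obtain ⟨m, hm, hmk⟩ := hwS.exists_gt k
    exact ⟨m, hmk, hm⟩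
  obtain ⟨N, hN, hNw⟩ := hex 0
  refine ⟨N, fun i hi j hj => ?_⟩
  obtain ⟨m, hmi, hmw⟩ := hex i
  have h1 : Relation.TransGen S (θ (f i)) w := hmw ▸ key i m hmi
  have h2 : Relation.TransGen S w (θ (f j)) := by
    rcases lt_or_eq_of_le hj with h | h
    · exact hNw ▸ key N j h
    · obtain ⟨p, hpN, hpw⟩ := hex N
      subst h
      rw [hNw]
      have := key N p hpN
      rw [hNw, hpw] at this
      exact this
  exact h1.trans h2
end

section
/- Let W be a finite type and S a binary relation on W. For every infinite walk f : ℕ → W with respect to S (i.e., S (f n) (f (n+1)) for all n), the set C = {a : W | f n = a for infinitely many n} of vertices visited infinitely often is nonempty, and for all a, b ∈ C (not necessarily distinct) there is a nonempty directed path from a to b, i.e., Relation.TransGen S a b. In particular, every vertex visited infinitely often lies on a directed cycle of S. -/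
/-- For an infinite walk `f` in a finite directed graph `S`, the set of vertices
visited infinitely often is nonempty, any two (not necessarily distinct) such
vertices are connected by a nonempty directed path, and in particular every such
vertex lies on a directed cycle. -/
theorem stmt_1 {W : Type*} [Finite W] (S : W → W → Prop)
    (f : ℕ → W) (hf : ∀ n, S (f n) (f (n + 1))) :
    ({a : W | {n : ℕ | f n = a}.Infinite}).Nonempty ∧
    (∀ a ∈ {a : W | {n : ℕ | f n = a}.Infinite},
      ∀ b ∈ {a : W | {n : ℕ | f n = a}.Infinite}, Relation.TransGen S a b) ∧
    (∀ a ∈ {a : W | {n : ℕ | f n = a}.Infinite}, Relation.TransGen S a a) := by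
  have hpath : ∀ m n : ℕ, m < n → Relation.TransGen S (f m) (f n) := by
    intro m n h
    induction n with
    | zero => omega
    | succ k ih =>
      rcases Nat.lt_succ_iff_lt_or_eq.mp h with h' | rfl
      · exact (ih h').tail (hf k)
      · exact Relation.TransGen.single (hf m)
  have hconn : ∀ a ∈ {a : W | {n : ℕ | f n = a}.Infinite},
      ∀ b ∈ {a : W | {n : ℕ | f n = a}.Infinite}, Relation.TransGen S a b := by
    intro a ha b hb
    obtain ⟨m, hm, -⟩ := ha.exists_gt 0
    obtain ⟨n, hn, hmn⟩ := hb.exists_gt m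
    exact hm ▸ hn ▸ hpath m n hmn
  refine ⟨?_, hconn, fun a ha => hconn a ha a ha⟩
  obtain ⟨a, ha⟩ := Finite.exists_infinite_fiber f
  exact ⟨a, by rw [Set.mem_setOf_eq, ← Set.infinite_coe_iff]; exact ha⟩
end

section
/- Let A and A' be binary relations on a type α, let ≽ and ≻ be binary relations on a type β, and let Rel : α → β → Prop. Assume: (i) there is no infinite sequence b₀ ≻ b₁ ≻ b₂ ≻ ⋯; (ii) for all x, y, z in β, if x ≽ y and y ≻ z then x ≻ z; (iii) whenever A a a' and Rel a b hold, there exists b' with Relation.ReflTransGen ≽ b b' and Rel a' b'; (iv) whenever A' a a' and Rel a b hold, there exist c and b' with b ≻ c, Relation.ReflTransGen ≽ c b', and Rel a' b'. Then there is no sequence f : ℕ → α such that Rel (f 0) b₀ holds for some b₀ ∈ β, every step satisfies A (f n) (f (n+1)) or A' (f n) (f (n+1)), and A' (f n) (f (n+1)) holds for infinitely many n. -/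
/-- Abstract simulation theorem underlying reduction triple processors:
`A`-steps are simulated by `≽*`-reductions and `A'`-steps by `≻ ∘ ≽*`-reductions
(via the relation `Rel` between the two carriers); with `≽ ∘ ≻ ⊆ ≻` and `≻`
admitting no infinite descending sequence, no infinite `A ∪ A'`-sequence related
to some starting point can use `A'` infinitely often. -/
theorem stmt_3 {α β : Type*} (A A' : α → α → Prop) (wge wgt : β → β → Prop)
    (Rel : α → β → Prop)
    (hwf : ¬ ∃ g : ℕ → β, ∀ n, wgt (g n) (g (n + 1)))
    (hcomp : ∀ x y z, wge x y → wgt y z → wgt x z)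
    (hA : ∀ a a' b, A a a' → Rel a b →
      ∃ b', Relation.ReflTransGen wge b b' ∧ Rel a' b')
    (hA' : ∀ a a' b, A' a a' → Rel a b →
      ∃ c b', wgt b c ∧ Relation.ReflTransGen wge c b' ∧ Rel a' b') :
    ¬ ∃ f : ℕ → α,
        (∃ b₀ : β, Rel (f 0) b₀) ∧
        (∀ n, A (f n) (f (n + 1)) ∨ A' (f n) (f (n + 1))) ∧
        {n : ℕ | A' (f n) (f (n + 1))}.Infinite := by
  rintro ⟨f, ⟨b₀, hb₀⟩, hstep, hinf⟩
  classical
  set p : ℕ → Prop := fun n => A' (f n) (f (n + 1)) with hp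
  -- absorption: wge* ∘ wgt ⊆ wgt
  have absorb : ∀ x y z, Relation.ReflTransGen wge x y → wgt y z → wgt x z := by
    intro x y z h
    induction h using Relation.ReflTransGen.head_induction_on with
    | refl => exact fun h => h
    | head hxy _ ih => exact fun hz => hcomp _ _ _ hxy (ih hz)
  -- one-step simulation
  have H : ∀ n (b : β), Rel (f n) b → ∃ b', Rel (f (n + 1)) b' ∧
      ((¬ p n → Relation.ReflTransGen wge b b') ∧
       (p n → ∃ c, wgt b c ∧ Relation.ReflTransGen wge c b')) := by
    intro n b hb
    by_cases hpn : p n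
    · obtain ⟨c, b', h1, h2, h3⟩ := hA' _ _ _ hpn hb
      exact ⟨b', h3, fun h => absurd hpn h, fun _ => ⟨c, h1, h2⟩⟩
    · have hAn : A (f n) (f (n + 1)) := (hstep n).resolve_right hpn
      obtain ⟨b', h1, h2⟩ := hA _ _ _ hAn hb
      exact ⟨b', h2, fun _ => h1, fun h => absurd h hpn⟩
  -- build the simulating sequence
  let B : ∀ n : ℕ, {b : β // Rel (f n) b} := fun n =>
    Nat.rec ⟨b₀, hb₀⟩ (fun n q => ⟨(H n q.1 q.2).choose, (H n q.1 q.2).choose_spec.1⟩) n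
  set b : ℕ → β := fun n => (B n).1 with hbdef
  have hbstep : ∀ n, (¬ p n → Relation.ReflTransGen wge (b n) (b (n + 1))) ∧
      (p n → ∃ c, wgt (b n) c ∧ Relation.ReflTransGen wge c (b (n + 1))) := by
    intro n
    exact (H n (B n).1 (B n).2).choose_spec.2
  -- weak chains over strict-free intervals
  have chain : ∀ m n, m ≤ n → (∀ j, m ≤ j → j < n → ¬ p j) →
      Relation.ReflTransGen wge (b m) (b n) := by
    intro m n hmn
    induction n, hmn using Nat.le_induction with
    | base => exact fun _ => Relation.ReflTransGen.refl
    | succ n hmn ih =>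
      intro hfree
      exact (ih fun j h1 h2 => hfree j h1 (Nat.lt_succ_of_lt h2)).trans
        ((hbstep n).1 (hfree n hmn (Nat.lt_succ_self n)))
  -- the enumeration of strict indices
  have hinf' : (setOf p).Infinite := hinf
  let k : ℕ → ℕ := Nat.nth p
  have hk : ∀ m, p (k m) := fun m => Nat.nth_mem_of_infinite hinf' m
  have hklt : ∀ m, k m < k (m + 1) := fun m =>
    (Nat.nth_lt_nth hinf').2 (Nat.lt_succ_self m)
  have gap : ∀ m j, k m < j → j < k (m + 1) → ¬ p j := by
    intro m j h1 h2 hpj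
    have hj : Nat.nth p (Nat.count p j) = j := Nat.nth_count hpj
    have hmlt : m < Nat.count p j := by
      by_contra hle
      push_neg at hle
      have : j ≤ k m := by
        have := (Nat.nth_le_nth hinf').2 hle
        rwa [hj] at this
      omega
    have : k (m + 1) ≤ j := by
      have := (Nat.nth_le_nth hinf').2 hmlt
      rwa [hj] at this
    omega
  -- witnesses after each strict step
  have hstrict : ∀ m, ∃ c, wgt (b (k m)) c ∧
      Relation.ReflTransGen wge c (b (k m + 1)) := fun m => (hbstep (k m)).2 (hk m)
  let g : ℕ → β := fun m => (hstrict m).choose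
  apply hwf
  refine ⟨g, fun m => ?_⟩
  obtain ⟨h1, h2⟩ := (hstrict m).choose_spec
  obtain ⟨h1', h2'⟩ := (hstrict (m + 1)).choose_spec
  have hle : k m + 1 ≤ k (m + 1) := hklt m
  have hmid : Relation.ReflTransGen wge (b (k m + 1)) (b (k (m + 1))) :=
    chain _ _ hle (fun j hj1 hj2 => gap m j (Nat.lt_of_succ_le hj1) hj2)
  exact absorb _ _ _ (h2.trans hmid) h1'
end

section
/- Let α be a type and Fin : α → Prop a predicate on α. Define a relation Step on finite subsets of α by: Step A B holds iff there exist Q ∈ A and a finite subset S of α such that B = (A \ {Q}) ∪ S and such that Fin Q holds whenever Fin x holds for every x ∈ S. If the empty set is reachable from the singleton {M} by finitely many Step-steps, i.e., Relation.ReflTransGen Step {M} ∅ holds, then Fin M holds. -/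
lemma stmt_4_aux {α : Type*} [DecidableEq α] (Fin' : α → Prop) (A : Finset α)
    (h : Relation.ReflTransGen
      (fun A B : Finset α => ∃ Q ∈ A, ∃ S : Finset α,
        B = (A \ {Q}) ∪ S ∧ ((∀ x ∈ S, Fin' x) → Fin' Q))
      A ∅) :
    ∀ x ∈ A, Fin' x := by
  induction h using Relation.ReflTransGen.head_induction_on with
  | refl => simp
  | head hAB _ ih =>
    obtain ⟨Q, hQ, S, rfl, hsound⟩ := hAB
    intro x hx
    by_cases hxQ : x = Q
    · subst hxQ
      exact hsound fun y hy => ih y (Finset.mem_union_right _ hy)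
    · exact ih x (Finset.mem_union_left _ (Finset.mem_sdiff.mpr ⟨hx, by simp [hxQ]⟩))

/-- Soundness of the DP framework procedure: if a sound processor step replaces a
problem `Q` of the current finite set by a finite set `S` of problems such that
`Q` is finite (`Fin' Q`) whenever all problems in `S` are finite, and the empty
set is reachable from `{M}`, then the initial problem `M` is finite. -/
theorem stmt_4 {α : Type*} [DecidableEq α] (Fin' : α → Prop) (M : α)
    (h : Relation.ReflTransGen
      (fun A B : Finset α => ∃ Q ∈ A, ∃ S : Finset α,
        B = (A \ {Q}) ∪ S ∧ ((∀ x ∈ S, Fin' x) → Fin' Q))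
      {M} ∅) :
    Fin' M :=
  stmt_4_aux Fin' {M} h M (Finset.mem_singleton_self M)
end

section
/- Let α be a type and Inf : α → Prop a predicate on α. Define a relation Step' on finite subsets of α by: Step' A B holds iff there exist Q ∈ A and a finite subset S of α such that B = (A \ {Q}) ∪ S and such that Inf Q holds whenever Inf x holds for some x ∈ S. If Relation.ReflTransGen Step' {M} A holds for some finite set A containing an element Q with Inf Q, then Inf M holds. -/
/-- Completeness of the DP framework procedure for non-termination: if a complete
processor step replaces a problem `Q` by a set `S` such that `Q` is infinite
(`Inf' Q`) whenever some problem in `S` is infinite, and from `{M}` one reaches a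
set `A` containing a problem known to be infinite, then `M` is infinite. -/
theorem stmt_5 {α : Type*} [DecidableEq α] (Inf' : α → Prop) (M : α) (A : Finset α)
    (h : Relation.ReflTransGen
      (fun A B : Finset α => ∃ Q ∈ A, ∃ S : Finset α,
        B = (A \ {Q}) ∪ S ∧ ((∃ x ∈ S, Inf' x) → Inf' Q))
      {M} A)
    (hA : ∃ Q ∈ A, Inf' Q) :
    Inf' M := by
  induction h with
  | refl =>
    obtain ⟨Q, hQ, hI⟩ := hA
    simpa [Finset.mem_singleton.mp hQ] using hI
  | tail _ hstep ih =>
    obtain ⟨Q0, hQ0, S, rfl, hS⟩ := hstep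
    obtain ⟨Q, hQ, hI⟩ := hA
    rcases Finset.mem_union.mp hQ with h1 | h2
    · exact ih ⟨Q, (Finset.mem_sdiff.mp h1).1, hI⟩
    · exact ih ⟨Q0, hQ0, hS ⟨Q, h2, hI⟩⟩
end

section
/- Let → and ⊳ be binary relations on a type α, and let (sᵢ) and (tᵢ) for i ∈ ℕ be sequences in α such that for every i, either sᵢ ⊳ tᵢ or sᵢ = tᵢ holds, and Relation.ReflTransGen (· → ·) tᵢ sᵢ₊₁ holds. If s₀ is terminating with respect to the union of → and ⊳ (there is no infinite sequence s₀ = u₀, u₁, u₂, … in which each step is a →-step or a ⊳-step), then sᵢ ⊳ tᵢ holds for only finitely many i. -/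
private lemma acc_transGen' {α : Type*} {R : α → α → Prop} {a : α} (h : Acc R a) :
    Acc (Relation.TransGen R) a := by
  induction h with
  | intro x _ IH =>
    refine Acc.intro x fun y hy => ?_
    cases hy with
    | single h => exact IH y h
    | tail hyb hbx => exact (IH _ hbx).inv hyb

private lemma acc_of_no_chain {α : Type*} (R : α → α → Prop) (x : α)
    (h : ¬ ∃ g : ℕ → α, g 0 = x ∧ ∀ n, R (g n) (g (n + 1))) :
    Acc (fun a b => R b a) x := by
  classical
  by_contra hx
  have key : ∀ y, ¬ Acc (fun a b => R b a) y →
      ∃ z, R y z ∧ ¬ Acc (fun a b => R b a) z := by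
    intro y hy
    by_contra hz
    push_neg at hz
    exact hy (Acc.intro y fun z hR => hz z hR)
  let g : ℕ → {y : α // ¬ Acc (fun a b => R b a) y} := fun n =>
    Nat.rec ⟨x, hx⟩ (fun _ p => ⟨(key p.1 p.2).choose, (key p.1 p.2).choose_spec.2⟩) n
  refine h ⟨fun n => (g n).1, rfl, fun n => ?_⟩
  exact (key (g n).1 (g n).2).choose_spec.1

private lemma aux_subterm {α : Type*} (r sub : α → α → Prop) :
    ∀ x : α, Acc (Relation.TransGen (fun a b => r b a ∨ sub b a)) x →
    ∀ s t : ℕ → α, s 0 = x →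
    (∀ i, sub (s i) (t i) ∨ s i = t i) →
    (∀ i, Relation.ReflTransGen r (t i) (s (i + 1))) →
    {i : ℕ | sub (s i) (t i)}.Finite := by
  intro x hx
  induction hx with
  | intro x _ IH =>
    intro s t hs0 hstep hred
    classical
    by_cases hne : ∃ i, sub (s i) (t i)
    · set step : α → α → Prop := fun u v => r u v ∨ sub u v with hstepdef
      let i := Nat.find hne
      have hstrict : sub (s i) (t i) := Nat.find_spec hne
      have hpath : ∀ j, j ≤ i → Relation.ReflTransGen step (s 0) (s j) := by
        intro j hj
        induction j with
        | zero => exact Relation.ReflTransGen.refl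
        | succ k hk =>
          have hki : k < i := Nat.lt_of_succ_le hj
          have h1 : Relation.ReflTransGen step (s 0) (s k) := hk hki.le
          have heq : s k = t k :=
            (hstep k).resolve_left (Nat.find_min hne hki)
          have h2 : Relation.ReflTransGen step (t k) (s (k + 1)) :=
            Relation.ReflTransGen.mono (fun a b h => Or.inl h) _ _ (hred k)
          exact h1.trans (heq ▸ h2)
      have htrans : Relation.TransGen step (s 0) (s (i + 1)) := by
        have h1 : Relation.ReflTransGen step (s 0) (s i) := hpath i le_rfl
        have h2 : Relation.TransGen step (s i) (s (i + 1)) :=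
          Relation.TransGen.head' (Or.inr hstrict)
            (Relation.ReflTransGen.mono (fun a b h => Or.inl h) _ _ (hred i))
        exact Relation.TransGen.trans_right h1 h2
      have hflip : Relation.TransGen (fun a b => r b a ∨ sub b a) (s (i + 1)) x := by
        rw [← hs0]
        have := (Relation.transGen_swap (r := step)).mpr htrans
        exact this
      have hfin : {k : ℕ | sub (s (i + 1 + k)) (t (i + 1 + k))}.Finite :=
        IH (s (i + 1)) hflip (fun k => s (i + 1 + k)) (fun k => t (i + 1 + k)) rfl
          (fun k => hstep (i + 1 + k)) (fun k => by
            have := hred (i + 1 + k)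
            simpa [Nat.add_assoc, Nat.add_comm, Nat.add_left_comm] using this)
      have hsub : {j : ℕ | sub (s j) (t j)} ⊆
          Set.Iic i ∪ (fun k => i + 1 + k) '' {k : ℕ | sub (s (i + 1 + k)) (t (i + 1 + k))} := by
        intro j hj
        by_cases hji : j ≤ i
        · exact Or.inl hji
        · refine Or.inr ⟨j - (i + 1), ?_, ?_⟩
          · have : i + 1 + (j - (i + 1)) = j := by omega
            simpa [this] using hj
          · show i + 1 + (j - (i + 1)) = j; omega
      exact ((Set.finite_Iic i).union (hfin.image _)).subset hsub
    · push_neg at hne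
      have : {i : ℕ | sub (s i) (t i)} = ∅ := by
        ext j; simp [hne j]
      simp [this]

/-- Abstract subterm criterion: given sequences `s`, `t` with each `s i ⊳ t i` or
`s i = t i`, and `t i →* s (i+1)`, if `s 0` is terminating w.r.t. the union of
`→` and `⊳`, then only finitely many steps are strict `⊳`-steps. -/
theorem stmt_9 {α : Type*} (r sub : α → α → Prop) (s t : ℕ → α)
    (hstep : ∀ i, sub (s i) (t i) ∨ s i = t i)
    (hred : ∀ i, Relation.ReflTransGen r (t i) (s (i + 1)))
    (hterm : ¬ ∃ g : ℕ → α, g 0 = s 0 ∧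
        ∀ n, r (g n) (g (n + 1)) ∨ sub (g n) (g (n + 1))) :
    {i : ℕ | sub (s i) (t i)}.Finite := by
  have hacc : Acc (fun a b => (r b a ∨ sub b a)) (s 0) :=
    acc_of_no_chain (fun u v => r u v ∨ sub u v) (s 0) hterm
  have hacc' : Acc (Relation.TransGen (fun a b => r b a ∨ sub b a)) (s 0) :=
    acc_transGen' hacc
  exact aux_subterm r sub (s 0) hacc' s t rfl hstep hred
end
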